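/- The class of languages accepted by quasi-deterministic sensing 5'→3' WK automata is a proper superset of 2detLIN (the class of languages accepted by deterministic sensing 5'→3' WK automata) and also a proper superset of the class of languages accepted by state-deterministic sensing 5'→3' WK automata. -/

import Mathlib

/-!
Determinism and state-determinism each force the successor state of a configuration, which gives
the inclusions.

`{aⁿbᵐ : n ≤ m ≤ 2n}` is accepted by a one-state automaton reading `a` on the left and `b` or `bb`
on the right. A deterministic automaton for it has a unique run on each word, and the runs on
`aⁿbⁿ` and `aⁿb²ⁿ` pass through the same state loop while both letters remain. Cutting the loop
out of both runs removes `i` letters `a` and `j` letters `b`, and the shortened words are accepted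
only if `j ≤ i` and `2i ≤ j`, so the loop reads nothing.

`a⁺ ∪ b⁺` is accepted by an automaton whose state records the first letter read. A
state-deterministic automaton visits the same sequence of states on `aᴺ` and `bᴺ`, so the two runs
can be spliced at a common state into an accepted word containing both letters.
-/

open Computability

/-- The two-letter alphabet `{a, b}`. -/
inductive Letter : Type
  | a : Letter
  | b : Letter
deriving DecidableEq

instance instFintypeLetter : Fintype Letter :=
  ⟨{Letter.a, Letter.b}, fun x => by cases x <;> simp⟩

open Letter

/-- A sensing 5'→3' Watson-Crick automaton over the alphabet `T` with state set `Q`: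
an initial state `q0`, a set `F` of final states, and a transition mapping
`δ : Q × T* × T* → 2^Q` that is nonempty for only finitely many triples. -/
structure WKAutomaton (T : Type) (Q : Type) where
  q0 : Q
  F : Set Q
  δ : Q → List T → List T → Set Q
  finite_delta : {t : Q × List T × List T | (δ t.1 t.2.1 t.2.2).Nonempty}.Finite

namespace WKAutomaton

variable {T Q : Type}

/-- One computation step on configurations:
`(q, x ++ w' ++ y) ⇒ (q', w')` iff `q' ∈ δ q x y`. -/
def Step (A : WKAutomaton T Q) (c c' : Q × List T) : Prop :=
  ∃ x y : List T, c.2 = x ++ c'.2 ++ y ∧ c'.1 ∈ A.δ c.1 x y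

/-- The accepted language: words `w` with `(q₀, w) ⇒* (q_F, λ)` for some final `q_F`. -/
def Lang (A : WKAutomaton T Q) : Set (List T) :=
  {w | ∃ qf ∈ A.F, Relation.ReflTransGen A.Step (A.q0, w) (qf, [])}

/-- `A` is deterministic: in every configuration at most one computation step
(choice of `x`, `y`, `w'`, `q'`) is applicable. -/
def Deterministic (A : WKAutomaton T Q) : Prop :=
  ∀ (q : Q) (w x₁ y₁ w₁ x₂ y₂ w₂ : List T) (q₁ q₂ : Q),
    w = x₁ ++ w₁ ++ y₁ → q₁ ∈ A.δ q x₁ y₁ →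
    w = x₂ ++ w₂ ++ y₂ → q₂ ∈ A.δ q x₂ y₂ →
    x₁ = x₂ ∧ y₁ = y₂ ∧ w₁ = w₂ ∧ q₁ = q₂

/-- `A` is quasi-deterministic: for every configuration `(q,w)`, whenever
`(q,w) ⇒ (p,u)` and `(q,w) ⇒ (r,v)`, it holds that `p = r`. -/
def QuasiDet (A : WKAutomaton T Q) : Prop :=
  ∀ (q : Q) (w : List T) (p r : Q) (u v : List T),
    A.Step (q, w) (p, u) → A.Step (q, w) (r, v) → p = r

/-- `A` is state-deterministic: for every state `q` there is at most one state `p`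
with `p ∈ δ(q,u,v)` for some words `u`, `v`. -/
def StateDet (A : WKAutomaton T Q) : Prop :=
  ∀ (q p₁ p₂ : Q) (u₁ v₁ u₂ v₂ : List T),
    p₁ ∈ A.δ q u₁ v₁ → p₂ ∈ A.δ q u₂ v₂ → p₁ = p₂

/-- `A` is stateless: `Q = F = {q₀}`. -/
def Stateless (A : WKAutomaton T Q) : Prop :=
  (∀ q : Q, q = A.q0) ∧ A.F = {A.q0}

/-- `A` is all-final: `Q = F`. -/
def AllFinal (A : WKAutomaton T Q) : Prop := A.F = Set.univ

/-- `A` is simple: at most one head reads in each step. -/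
def Simple (A : WKAutomaton T Q) : Prop :=
  ∀ (q : Q) (u v : List T), (A.δ q u v).Nonempty → u = [] ∨ v = []

/-- `A` is 1-limited: exactly one letter is read in each step. -/
def OneLimited (A : WKAutomaton T Q) : Prop :=
  ∀ (q : Q) (u v : List T), (A.δ q u v).Nonempty →
    (u = [] ∧ v.length = 1) ∨ (u.length = 1 ∧ v = [])

end WKAutomaton

/-- Equality of languages modulo the empty word. -/
def EqModLambda {T : Type} (L₁ L₂ : Set (List T)) : Prop :=
  ∀ w : List T, w ≠ [] → (w ∈ L₁ ↔ w ∈ L₂)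

/-- `L` is accepted (modulo the empty word) by some sensing 5'→3' WK automaton
with a finite state set satisfying the property `P`. -/
def AcceptsWith (T : Type) (P : ∀ Q : Type, WKAutomaton T Q → Prop)
    (L : Set (List T)) : Prop :=
  ∃ (Q : Type) (_ : Finite Q) (A : WKAutomaton T Q), P Q A ∧ EqModLambda A.Lang L

open Relation List

section SizedRuns

variable {α : Type*} {r : α → α → Prop} {f : α → ℕ} {D : ℕ}

theorem Relation.ReflTransGen.size_le (hr : ∀ x y, r x y → f y ≤ f x) {x y : α}
    (h : ReflTransGen r x y) : f y ≤ f x := by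
  induction h with
  | refl => rfl
  | tail _ hyz ih => exact (hr _ _ hyz).trans ih

theorem Relation.ReflTransGen.exists_size_between (hD : ∀ x y, r x y → f x ≤ f y + D)
    {x y : α} {ℓ : ℕ} (h : ReflTransGen r x y) (hy : f y ≤ ℓ) (hx : ℓ ≤ f x) :
    ∃ z, ReflTransGen r x z ∧ ReflTransGen r z y ∧ ℓ ≤ f z ∧ f z ≤ ℓ + D := by
  induction h using Relation.ReflTransGen.head_induction_on with
  | refl => exact ⟨y, .refl, .refl, hx, by omega⟩
  | @head x z hxz hzy ih =>
    by_cases hz : ℓ ≤ f z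
    · obtain ⟨w, hzw, hwy, hw⟩ := ih hz
      exact ⟨w, .head hxz hzw, hwy, hw⟩
    · exact ⟨x, .refl, .head hxz hzy, hx, by have := hD _ _ hxz; omega⟩

/-- Sample the run in `card Q + 1` disjoint size windows: two samples share a state, and by
right-uniqueness the larger one reaches the smaller one. -/
theorem Relation.ReflTransGen.exists_loop {Q : Type*} [Fintype Q] (st : α → Q)
    (hU : Relator.RightUnique r) (hr : ∀ x y, r x y → f y ≤ f x)
    (hD : ∀ x y, r x y → f x ≤ f y + D) {x y : α} {m : ℕ} (h : ReflTransGen r x y)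
    (hy : f y ≤ m) (hx : m + (Fintype.card Q + 1) * (D + 1) ≤ f x) :
    ∃ z z', ReflTransGen r x z ∧ ReflTransGen r z z' ∧ st z = st z' ∧ f z' < f z ∧
      m < f z' := by
  have hsample : ∀ k : Fin (Fintype.card Q + 1), ∃ z, ReflTransGen r x z ∧
      m + 1 + k * (D + 1) ≤ f z ∧ f z ≤ m + 1 + k * (D + 1) + D := by
    intro k
    have hk : (k : ℕ) * (D + 1) ≤ Fintype.card Q * (D + 1) :=
      Nat.mul_le_mul_right _ (Nat.lt_succ_iff.1 k.isLt)
    obtain ⟨z, hxz, -, hz⟩ := h.exists_size_between hD (ℓ := m + 1 + k * (D + 1)) (by omega)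
      (by nlinarith)
    exact ⟨z, hxz, hz⟩
  choose z hxz hz using hsample
  obtain ⟨k, l, hkl, hst⟩ := Fintype.exists_ne_map_eq_of_card_lt (st ∘ z) (by simp)
  wlog hlt : k < l generalizing k l
  · exact this l k hkl.symm hst.symm (lt_of_le_of_ne (not_lt.1 hlt) hkl.symm)
  have hkl' : (k : ℕ) * (D + 1) + (D + 1) ≤ l * (D + 1) := by
    rw [← Nat.succ_mul]; exact Nat.mul_le_mul_right _ hlt
  have hsize : f (z k) < f (z l) := by linarith [(hz k).2, (hz l).1]
  have hlk : ReflTransGen r (z l) (z k) :=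
    ((hxz l).total_of_right_unique hU (hxz k)).resolve_right
      fun hback => absurd (hback.size_le hr) (not_le.2 hsize)
  exact ⟨z l, z k, hxz l, hlk, hst.symm, hsize,
    by linarith [(hz k).1, Nat.zero_le ((k : ℕ) * (D + 1))]⟩

end SizedRuns

theorem List.mem_of_infix_replicate {α : Type*} {l : List α} {n : ℕ} {x : α} (hl : l ≠ [])
    (h : l <:+: replicate n x) : x ∈ l := by
  obtain ⟨y, hy⟩ := exists_mem_of_ne_nil l hl
  rwa [← eq_of_mem_replicate (h.subset hy)]

theorem List.eq_replicate_of_suffix {α : Type*} {l l' : List α} {n : ℕ} {x : α}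
    (h : l <:+ l' ++ replicate n x) (hl : l.length ≤ n) : l = replicate l.length x :=
  eq_replicate_iff.2 ⟨rfl, fun _ hy => eq_of_mem_replicate
    ((suffix_of_suffix_length_le h (suffix_append _ _) (by simpa using hl)).subset hy)⟩

theorem List.replicate_append_replicate_two_mul_of_eq {α : Type*} {x y : α} {n : ℕ}
    {P u S : List α} (h : replicate n x ++ replicate n y = P ++ u ++ S) (hu : n < u.length) :
    replicate n x ++ replicate (2 * n) y = P ++ (u ++ replicate n y) ++ S := by
  have hlen := congrArg length h
  simp only [length_append, length_replicate] at hlen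
  have hS : S = replicate S.length y :=
    eq_replicate_of_suffix (l' := replicate n x) ⟨P ++ u, h.symm⟩ (by omega)
  rw [two_mul, ← replicate_append_replicate, ← append_assoc, h, hS, append_assoc,
    replicate_append_replicate, Nat.add_comm, ← replicate_append_replicate]
  simp

namespace WKAutomaton

variable {T Q : Type} {A : WKAutomaton T Q}

theorem reflTransGen_context {C C' : Q × List T} (h : ReflTransGen A.Step C C') :
    ∃ X Y, C.2 = X ++ C'.2 ++ Y ∧ ∀ Z, ReflTransGen A.Step (C.1, X ++ Z ++ Y) (C'.1, Z) := by
  induction h with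
  | refl => exact ⟨[], [], by simp, fun Z => by simpa using .refl⟩
  | @tail C₁ C₂ _ hstep ih =>
    obtain ⟨X, Y, hXY, hrun⟩ := ih
    obtain ⟨x, y, hxy, hδ⟩ := hstep
    refine ⟨X ++ x, y ++ Y, by simp [hXY, hxy], fun Z => ?_⟩
    have hstep' : A.Step (C₁.1, x ++ Z ++ y) (C₂.1, Z) := ⟨x, y, rfl, hδ⟩
    simpa using (hrun (x ++ Z ++ y)).tail hstep'

theorem reflTransGen_infix {C C' : Q × List T} (h : ReflTransGen A.Step C C') :
    C'.2 <:+: C.2 := by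
  obtain ⟨X, Y, hC, -⟩ := reflTransGen_context h
  exact ⟨X, Y, hC.symm⟩

theorem step_length_le {C C' : Q × List T} (h : A.Step C C') : C'.2.length ≤ C.2.length :=
  (reflTransGen_infix (.single h)).length_le

theorem exists_step_length_le (A : WKAutomaton T Q) :
    ∃ D, ∀ C C', A.Step C C' → C.2.length ≤ C'.2.length + D := by
  obtain ⟨D, hD⟩ := (A.finite_delta.image fun t => t.2.1.length + t.2.2.length).bddAbove
  refine ⟨D, fun C C' ⟨x, y, hC, hδ⟩ => ?_⟩
  have := hD ⟨(C.1, x, y), ⟨C'.1, hδ⟩, rfl⟩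
  simp only [hC, length_append] at this ⊢
  omega

theorem exists_splice_mem_lang {w u v : List T} {s g : Q}
    (h₁ : ReflTransGen A.Step (A.q0, w) (s, u)) (h₂ : ReflTransGen A.Step (s, v) (g, []))
    (hg : g ∈ A.F) : ∃ X Y, w = X ++ u ++ Y ∧ X ++ v ++ Y ∈ A.Lang := by
  obtain ⟨X, Y, hw, hrun⟩ := reflTransGen_context h₁
  exact ⟨X, Y, hw, g, hg, (hrun v).trans h₂⟩

theorem exists_mem_lang_mem_mem {n : ℕ} {x y : T} {u v : List T} {s g : Q}
    (h₁ : ReflTransGen A.Step (A.q0, replicate n x) (s, u)) (hu : u ≠ replicate n x)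
    (h₂ : ReflTransGen A.Step (s, v) (g, [])) (hg : g ∈ A.F) (hv : y ∈ v) :
    ∃ W ∈ A.Lang, x ∈ W ∧ y ∈ W := by
  obtain ⟨X, Y, hw, hW⟩ := exists_splice_mem_lang h₁ h₂ hg
  have hXY : X ++ Y ≠ [] := by
    intro h
    obtain ⟨rfl, rfl⟩ := append_eq_nil_iff.1 h
    exact hu (by simpa using hw.symm)
  obtain ⟨z, hz⟩ := exists_mem_of_ne_nil _ hXY
  have hzx : z = x := eq_of_mem_replicate (by rw [hw]; simp only [mem_append] at hz ⊢; tauto)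
  subst hzx
  refine ⟨_, hW, ?_, by simp [hv]⟩
  simp only [mem_append] at hz ⊢
  tauto

theorem Deterministic.rightUnique (hA : A.Deterministic) : Relator.RightUnique A.Step := by
  rintro ⟨q, w⟩ ⟨p, u⟩ ⟨p', u'⟩ ⟨x, y, hw, hδ⟩ ⟨x', y', hw', hδ'⟩
  obtain ⟨-, -, rfl, rfl⟩ := hA q w x y u x' y' u' p p' hw hδ hw' hδ'
  rfl

theorem Deterministic.quasiDet (hA : A.Deterministic) : A.QuasiDet :=
  fun _ _ _ _ _ _ h h' => congrArg Prod.fst (hA.rightUnique h h')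

theorem Deterministic.reflTransGen_of_reflTransGen (hA : A.Deterministic)
    {C C' : Q × List T} {g : Q} (h : ReflTransGen A.Step C (g, []))
    (h' : ReflTransGen A.Step C C') (hC' : C'.2 ≠ []) : ReflTransGen A.Step C' (g, []) :=
  (h.total_of_right_unique hA.rightUnique h').resolve_left
    fun h'' => hC' (eq_nil_of_infix_nil (reflTransGen_infix h''))

theorem Deterministic.mem_lang_of_loop (hA : A.Deterministic) {s : Q} {X₀ Y₀ X Y Z : List T}
    (h₀ : ∀ Z', ReflTransGen A.Step (A.q0, X₀ ++ Z' ++ Y₀) (s, Z'))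
    (hloop : ∀ Z', ReflTransGen A.Step (s, X ++ Z' ++ Y) (s, Z'))
    (hw : X₀ ++ (X ++ Z ++ Y) ++ Y₀ ∈ A.Lang) (hZ : Z ≠ []) :
    X₀ ++ Z ++ Y₀ ∈ A.Lang := by
  obtain ⟨g, hg, hrun⟩ := hw
  exact ⟨g, hg, (h₀ Z).trans
    (hA.reflTransGen_of_reflTransGen hrun ((h₀ _).trans (hloop Z)) hZ)⟩

theorem StateDet.fst_eq_of_step (hA : A.StateDet) {q : Q} {w w' : List T}
    {C C' : Q × List T} (h : A.Step (q, w) C) (h' : A.Step (q, w') C') : C.1 = C'.1 := by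
  obtain ⟨x, y, -, hδ⟩ := h
  obtain ⟨x', y', -, hδ'⟩ := h'
  exact hA q _ _ x y x' y' hδ hδ'

theorem StateDet.quasiDet (hA : A.StateDet) : A.QuasiDet :=
  fun _ _ _ _ _ _ h h' => hA.fst_eq_of_step h h'

/-- Two runs from the same state visit the same states in the same order. -/
theorem StateDet.reflTransGen_sync (hA : A.StateDet) {s g : Q} {u v : List T}
    {C : Q × List T} (h₁ : ReflTransGen A.Step (s, u) C)
    (h₂ : ReflTransGen A.Step (s, v) (g, [])) :
    (∃ v', ReflTransGen A.Step (s, v) (C.1, v') ∧ ReflTransGen A.Step (C.1, v') (g, [])) ∨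
      ∃ u', ReflTransGen A.Step (s, u) (g, u') ∧ ReflTransGen A.Step (g, u') C := by
  induction h₁ with
  | refl => exact .inl ⟨v, .refl, h₂⟩
  | @tail C₁ C₂ h₁ hstep ih =>
    rcases ih with ⟨v', hv, hv'⟩ | ⟨u', hu, hu'⟩
    · rcases hv'.cases_head with heq | ⟨C', hC', hC'g⟩
      · obtain ⟨hC₁, -⟩ := Prod.mk.inj heq
        exact .inr ⟨C₁.2, hC₁ ▸ h₁, hC₁ ▸ .single hstep⟩
      · have hC₂ : C₂.1 = C'.1 := hA.fst_eq_of_step hstep hC'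
        exact .inl ⟨C'.2, hv.tail (hC₂ ▸ hC'), hC₂ ▸ hC'g⟩
    · exact .inr ⟨u', hu, hu'.tail hstep⟩

end WKAutomaton

theorem AcceptsWith.mono {T : Type} {P P' : ∀ Q : Type, WKAutomaton T Q → Prop}
    {L : Set (List T)} (hP : ∀ Q A, P Q A → P' Q A) : AcceptsWith T P L → AcceptsWith T P' L
  | ⟨Q, hQ, A, hA, hL⟩ => ⟨Q, hQ, A, hP Q A hA, hL⟩

theorem WKAutomaton.acceptsWith_lang {T Q : Type} [Finite Q]
    {P : ∀ Q : Type, WKAutomaton T Q → Prop} (A : WKAutomaton T Q) (hA : P Q A) :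
    AcceptsWith T P A.Lang :=
  ⟨Q, ‹_›, A, hA, fun _ _ => Iff.rfl⟩

theorem Letter.count_a_add_count_b (w : List Letter) : w.count a + w.count b = w.length := by
  induction w with
  | nil => rfl
  | cons x w ih => cases x <;> simp <;> omega

def stretchAutomaton : WKAutomaton Letter Unit where
  q0 := ()
  F := Set.univ
  δ _ x y := {_u | x = [a] ∧ (y = [b] ∨ y = [b, b])}
  finite_delta := (Set.toFinite {((), [a], [b]), ((), [a], [b, b])}).subset <| by
    rintro ⟨⟨⟩, x, y⟩ ⟨_, rfl, rfl | rfl⟩ <;> simp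

theorem stretchAutomaton_quasiDet : stretchAutomaton.QuasiDet :=
  fun _ _ _ _ _ _ _ _ => rfl

theorem replicate_append_replicate_mem_stretchAutomaton (n : ℕ) {k : ℕ} (hk : k = 1 ∨ k = 2) :
    replicate n a ++ replicate (k * n) b ∈ stretchAutomaton.Lang := by
  refine ⟨(), trivial, ?_⟩
  induction n with
  | zero => exact .refl
  | succ n ih =>
    refine .head ⟨[a], replicate k b, ?_, rfl, by rcases hk with rfl | rfl <;> simp⟩ ih
    rw [Nat.mul_succ, ← replicate_append_replicate (n := k * n), replicate_succ]
    simp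

theorem count_le_of_mem_stretchAutomaton {w : List Letter} (hw : w ∈ stretchAutomaton.Lang) :
    w.count a ≤ w.count b ∧ w.count b ≤ 2 * w.count a := by
  obtain ⟨⟨⟩, -, h⟩ := hw
  suffices ∀ C, ReflTransGen stretchAutomaton.Step C ((), []) →
      C.2.count a ≤ C.2.count b ∧ C.2.count b ≤ 2 * C.2.count a from this _ h
  intro C hC
  induction hC using Relation.ReflTransGen.head_induction_on with
  | refl => simp
  | head hstep _ ih =>
    obtain ⟨x, y, hC, rfl, hy⟩ := hstep
    rcases hy with rfl | rfl <;> simp [hC] <;> omega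

theorem not_acceptsWith_deterministic_stretchAutomaton :
    ¬ AcceptsWith Letter (fun _ A => A.Deterministic) stretchAutomaton.Lang := by
  rintro ⟨Q, _, B, hB, hL⟩
  have := Fintype.ofFinite Q
  obtain ⟨D, hD⟩ := B.exists_step_length_le
  set n := (Fintype.card Q + 1) * (D + 1)
  have hn1 : 0 < n := by positivity
  have mem : ∀ k, k = 1 ∨ k = 2 → replicate n a ++ replicate (k * n) b ∈ B.Lang :=
    fun k hk => (hL _ (by simp)).2 (replicate_append_replicate_mem_stretchAutomaton n hk)
  obtain ⟨_, -, run₁⟩ := mem 1 (.inl rfl)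
  obtain ⟨⟨s, u⟩, ⟨s', u'⟩, hsu, hloop, rfl : s = s', hlt, hnu'⟩ :=
    run₁.exists_loop Prod.fst hB.rightUnique (fun _ _ => WKAutomaton.step_length_le) hD
      (m := n) (by simp) (by simp; omega)
  obtain ⟨X₀, Y₀, hw, hrun₀⟩ := WKAutomaton.reflTransGen_context hsu
  obtain ⟨X, Y, rfl, hloop'⟩ := WKAutomaton.reflTransGen_context hloop
  simp only [one_mul] at hw
  simp only [length_append] at hlt hnu'
  have hw₂ := replicate_append_replicate_two_mul_of_eq (P := X₀ ++ X) (S := Y ++ Y₀)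
    (by simpa using hw) hnu'
  have hu' : u' ≠ [] := ne_nil_of_length_pos (by omega)
  have hW₁ : X₀ ++ u' ++ Y₀ ∈ B.Lang := hB.mem_lang_of_loop hrun₀ hloop'
    (by rw [← hw]; simpa using mem 1 (.inl rfl)) hu'
  have hW₂ : X₀ ++ (u' ++ replicate n b) ++ Y₀ ∈ B.Lang :=
    hB.mem_lang_of_loop hrun₀ hloop' (by simpa [hw₂] using mem 2 (.inr rfl)) (by simp)
  have h₁ := count_le_of_mem_stretchAutomaton ((hL _ (by simp [hu'])).1 hW₁)
  have h₂ := count_le_of_mem_stretchAutomaton ((hL _ (by simp)).1 hW₂)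
  have hca := congrArg (count a) hw
  have hcb := congrArg (count b) hw
  simp only [count_append, count_replicate_self, count_replicate, beq_iff_eq, reduceCtorEq,
    ↓reduceIte, add_zero] at h₁ h₂ hca hcb
  have := Letter.count_a_add_count_b X
  have := Letter.count_a_add_count_b Y
  omega

/-- From `none` the next state is the first letter read: it is determined by the word, not by
the state. -/
def oneLetterAutomaton : WKAutomaton Letter (Option Letter) where
  q0 := none
  F := Set.range some
  δ q x y := {p | ∃ l, x = [l] ∧ y = [] ∧ p = some l ∧ (q = none ∨ q = some l)}
  finite_delta :=
    (Set.finite_range fun t : Option Letter × Letter => (t.1, [t.2], [])).subset <| by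
      rintro ⟨q, x, y⟩ ⟨_, l, rfl, rfl, -, -⟩
      exact ⟨(q, l), rfl⟩

theorem oneLetterAutomaton_quasiDet : oneLetterAutomaton.QuasiDet := by
  rintro q w p r u v ⟨x, y, hw, l, rfl, rfl, rfl, -⟩ ⟨x', y', hw', l', rfl, rfl, rfl, -⟩
  simp only [singleton_append, append_nil] at hw hw'
  rw [hw] at hw'
  cases hw'
  rfl

theorem replicate_succ_mem_oneLetterAutomaton (l : Letter) (n : ℕ) :
    replicate (n + 1) l ∈ oneLetterAutomaton.Lang := by
  refine ⟨some l, ⟨l, rfl⟩, ?_⟩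
  suffices ∀ q, q = none ∨ q = some l →
      ReflTransGen oneLetterAutomaton.Step (q, replicate (n + 1) l) (some l, []) from
    this _ (.inl rfl)
  induction n with
  | zero => exact fun q hq => .single ⟨[l], [], by simp, l, rfl, rfl, rfl, hq⟩
  | succ n ih =>
    exact fun q hq => .head ⟨[l], [], by simp [replicate_succ], l, rfl, rfl, rfl, hq⟩
      (ih _ (.inr rfl))

theorem exists_eq_of_mem_oneLetterAutomaton {w : List Letter}
    (hw : w ∈ oneLetterAutomaton.Lang) : ∃ l, ∀ x ∈ w, x = l := by
  obtain ⟨_, ⟨l₀, rfl⟩, h⟩ := hw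
  suffices ∀ C, ReflTransGen oneLetterAutomaton.Step C (some l₀, []) →
      ∃ l, (C.1 = none ∨ C.1 = some l) ∧ ∀ x ∈ C.2, x = l from
    (this _ h).imp fun _ => And.right
  intro C hC
  induction hC using Relation.ReflTransGen.head_induction_on with
  | refl => exact ⟨l₀, .inr rfl, by simp⟩
  | head hstep _ ih =>
    obtain ⟨x, y, hC, l, rfl, rfl, hp, hq⟩ := hstep
    obtain ⟨l', hl', hall⟩ := ih
    obtain rfl : l' = l := by rcases hl' with h | h <;> simp_all
    refine ⟨l', hq, ?_⟩
    simpa [hC] using hall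

theorem not_acceptsWith_stateDet_oneLetterAutomaton :
    ¬ AcceptsWith Letter (fun _ A => A.StateDet) oneLetterAutomaton.Lang := by
  rintro ⟨Q, _, B, hB, hL⟩
  obtain ⟨D, hD⟩ := B.exists_step_length_le
  have mem : ∀ l, replicate (D + 2) l ∈ B.Lang := fun l =>
    (hL _ (by simp)).2 (replicate_succ_mem_oneLetterAutomaton l (D + 1))
  obtain ⟨f, hf, runA⟩ := mem a
  obtain ⟨g, hg, runB⟩ := mem b
  obtain ⟨⟨t, u⟩, hu₀, hu, hu₁, hu₂⟩ :=
    runA.exists_size_between hD (ℓ := 1) (by simp) (by simp)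
  have hua : a ∈ u := mem_of_infix_replicate (ne_nil_of_length_pos hu₁)
    (WKAutomaton.reflTransGen_infix hu₀)
  -- Splice at a common state, using a prefix that has consumed a letter; if the run on `bᴺ`
  -- ends first, its whole run goes in front of the rest of the run on `aᴺ`.
  have hmixed : ∃ W ∈ B.Lang, a ∈ W ∧ b ∈ W := by
    rcases hB.reflTransGen_sync hu₀ runB with ⟨v, hv, hvg⟩ | ⟨u', hu', hu't⟩
    · by_cases hvN : v = replicate (D + 2) b
      · subst hvN
        exact WKAutomaton.exists_mem_lang_mem_mem hu₀ (by rintro rfl; simp at hu₂; omega) hvg hg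
          (by simp)
      · obtain ⟨W, hW, hb, ha⟩ := WKAutomaton.exists_mem_lang_mem_mem hv hvN hu hf hua
        exact ⟨W, hW, ha, hb⟩
    · obtain ⟨W, hW, hb, ha⟩ := WKAutomaton.exists_mem_lang_mem_mem runB (by simp)
        (hu't.trans hu) hf ((WKAutomaton.reflTransGen_infix hu't).subset hua)
      exact ⟨W, hW, ha, hb⟩
  obtain ⟨W, hW, ha, hb⟩ := hmixed
  obtain ⟨l, hl⟩ := exists_eq_of_mem_oneLetterAutomaton ((hL W (ne_nil_of_mem ha)).1 hW)
  exact absurd ((hl a ha).trans (hl b hb).symm) (by decide)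

/-- The class of languages accepted by quasi-deterministic sensing 5'→3' WK
automata is a proper superset of 2detLIN (the class of languages accepted by
deterministic sensing 5'→3' WK automata), and also a proper superset of the
class of languages accepted by state-deterministic sensing 5'→3' WK automata. -/
theorem quasiDet_proper_superset_of_det_and_stateDet :
    (∀ (T : Type) (L : Set (List T)),
      AcceptsWith T (fun _ A => A.Deterministic) L →
      AcceptsWith T (fun _ A => A.QuasiDet) L) ∧
    (∀ (T : Type) (L : Set (List T)),
      AcceptsWith T (fun _ A => A.StateDet) L →
      AcceptsWith T (fun _ A => A.QuasiDet) L) ∧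
    (∃ L : Set (List Letter),
      AcceptsWith Letter (fun _ A => A.QuasiDet) L ∧
      ¬ AcceptsWith Letter (fun _ A => A.Deterministic) L) ∧
    (∃ L : Set (List Letter),
      AcceptsWith Letter (fun _ A => A.QuasiDet) L ∧
      ¬ AcceptsWith Letter (fun _ A => A.StateDet) L) :=
  ⟨fun _ _ => AcceptsWith.mono fun _ _ => WKAutomaton.Deterministic.quasiDet,
    fun _ _ => AcceptsWith.mono fun _ _ => WKAutomaton.StateDet.quasiDet,
    ⟨_, stretchAutomaton.acceptsWith_lang stretchAutomaton_quasiDet,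
      not_acceptsWith_deterministic_stretchAutomaton⟩,
    ⟨_, oneLetterAutomaton.acceptsWith_lang oneLetterAutomaton_quasiDet,
      not_acceptsWith_stateDet_oneLetterAutomaton⟩⟩
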